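/- Let μ > −1 and let P_{j,ν}^{n,μ}(x) = P_j^{(μ, n−2j+(d−2)/2)}(2‖x‖²−1) Y_ν^{n−2j}(x), where Y_ν^{n−2j} is a spherical harmonic of degree n−2j with L²(S^{d−1})-norm 1. Then Δ P_{j,ν}^{n,μ}(x) = 4(n−j+μ+d/2)(n−j+(d−2)/2) P_{j−1,ν}^{n−2,μ+2}(x) for j ≥ 1, and Δ P_{0,ν}^{n,μ} = 0. -/

import Mathlib

open scoped BigOperators
open MeasureTheory

noncomputable def poch (a : ℝ) (n : ℕ) : ℝ := ∏ i ∈ Finset.range n, (a + i)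

noncomputable def gegenbauer (n : ℕ) (lam t : ℝ) : ℝ :=
  ∑ k ∈ Finset.range (n / 2 + 1),
    (-1 : ℝ) ^ k * poch lam (n - k) /
      ((Nat.factorial k : ℝ) * (Nat.factorial (n - 2 * k) : ℝ)) * (2 * t) ^ (n - 2 * k)

noncomputable def jacobi (j : ℕ) (a b t : ℝ) : ℝ :=
  poch (a + 1) j / (Nat.factorial j : ℝ) *
    ∑ k ∈ Finset.range (j + 1),
      poch (-(j : ℝ)) k * poch ((j : ℝ) + a + b + 1) k /
        (poch (a + 1) k * (Nat.factorial k : ℝ)) * ((1 - t) / 2) ^ k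

noncomputable def pd {d : ℕ} (i : Fin d) (f : EuclideanSpace ℝ (Fin d) → ℝ)
    (x : EuclideanSpace ℝ (Fin d)) : ℝ :=
  fderiv ℝ f x (EuclideanSpace.single i 1)

noncomputable def lap {d : ℕ} (f : EuclideanSpace ℝ (Fin d) → ℝ)
    (x : EuclideanSpace ℝ (Fin d)) : ℝ :=
  ∑ i, pd i (pd i f) x

noncomputable def Dang {d : ℕ} (i j : Fin d) (f : EuclideanSpace ℝ (Fin d) → ℝ)
    (x : EuclideanSpace ℝ (Fin d)) : ℝ :=
  x i * pd j f x - x j * pd i f x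

noncomputable def lapS {d : ℕ} (f : EuclideanSpace ℝ (Fin d) → ℝ)
    (x : EuclideanSpace ℝ (Fin d)) : ℝ :=
  ∑ p ∈ Finset.univ.filter (fun p : Fin d × Fin d => p.1 < p.2),
    Dang p.1 p.2 (Dang p.1 p.2 f) x

/-!
Write `P_j^{(a,b)}(2‖x‖² - 1) = p(1 - ‖x‖²)` with `p` the hypergeometric polynomial in
`u = (1 - t) / 2`. For a radial factor `f(‖x‖²)` and a harmonic `Y` homogeneous of degree `m`,
the product rule and Euler's identity `x · ∇Y = m Y` give
`Δ(f(‖x‖²) Y) = (4 r f''(r) + (2d + 4m) f'(r)) Y` with `r = ‖x‖²`. In the variable `u = 1 - r`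
this operator is `4((1 - u) ∂² - (b + 1) ∂)` with `b = m + (d - 2)/2`, and a comparison of the
coefficients of the hypergeometric series shows that it sends `P_{j+1}^{(a,b)}` to
`4 (j + a + b + 2)(j + b + 1) P_j^{(a+2,b)}`.
-/

open Polynomial
open scoped Nat

lemma poch_eq_eval_ascPochhammer (a : ℝ) (n : ℕ) : poch a n = (ascPochhammer ℝ n).eval a := by
  induction n with
  | zero => simp [poch]
  | succ n ih => rw [poch, Finset.prod_range_succ, ← poch, ih, ascPochhammer_succ_eval]

lemma poch_succ (a : ℝ) (n : ℕ) : poch a (n + 1) = poch a n * (a + n) := by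
  rw [poch_eq_eval_ascPochhammer, poch_eq_eval_ascPochhammer, ascPochhammer_succ_eval]

lemma poch_succ' (a : ℝ) (n : ℕ) : poch a (n + 1) = a * poch (a + 1) n := by
  simp [poch_eq_eval_ascPochhammer, ascPochhammer_succ_left]

lemma poch_add_two (a : ℝ) (n : ℕ) : poch a (n + 2) = a * (a + 1) * poch (a + 2) n := by
  rw [poch_succ', poch_succ', mul_assoc, add_assoc, one_add_one_eq_two]

lemma poch_pos {a : ℝ} (ha : 0 < a) (n : ℕ) : 0 < poch a n := by
  rw [poch_eq_eval_ascPochhammer]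
  exact ascPochhammer_pos n a ha

lemma poch_neg_natCast_of_lt {j k : ℕ} (h : j < k) : poch (-j) k = 0 := by
  rw [poch_eq_eval_ascPochhammer, ascPochhammer_eval_neg_coe_nat_of_lt h]

noncomputable def jacobiCoeff (j : ℕ) (a b : ℝ) (k : ℕ) : ℝ :=
  poch (a + 1) j / j ! * (poch (-j) k * poch (j + a + b + 1) k / (poch (a + 1) k * k !))

lemma jacobiCoeff_eq_zero_of_lt {j k : ℕ} (a b : ℝ) (h : j < k) : jacobiCoeff j a b k = 0 := by
  simp [jacobiCoeff, poch_neg_natCast_of_lt h]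

noncomputable def jacobiPoly (j : ℕ) (a b : ℝ) : ℝ[X] :=
  ∑ k ∈ Finset.range (j + 1), monomial k (jacobiCoeff j a b k)

lemma coeff_jacobiPoly (j : ℕ) (a b : ℝ) (k : ℕ) :
    (jacobiPoly j a b).coeff k = jacobiCoeff j a b k := by
  rw [jacobiPoly, finsetSum_coeff]
  simp only [coeff_monomial, Finset.sum_ite_eq', Finset.mem_range]
  split_ifs with hk
  · rfl
  · exact (jacobiCoeff_eq_zero_of_lt a b (by omega)).symm

lemma jacobi_zero (a b t : ℝ) : jacobi 0 a b t = 1 := by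
  simp [jacobi, poch]

lemma jacobi_eq_eval_jacobiPoly (j : ℕ) (a b t : ℝ) :
    jacobi j a b t = (jacobiPoly j a b).eval ((1 - t) / 2) := by
  simp only [jacobi, jacobiPoly, eval_finsetSum, eval_monomial, jacobiCoeff, Finset.mul_sum]
  refine Finset.sum_congr rfl fun k _ => ?_
  ring

lemma jacobiCoeff_lowering (j k : ℕ) {a : ℝ} (b : ℝ) (ha : -1 < a) :
    (k + 2) * (k + 1) * jacobiCoeff (j + 1) a b (k + 2)
      - (k + 1) * (k + 1 + b) * jacobiCoeff (j + 1) a b (k + 1)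
    = (j + a + b + 2) * (j + 1 + b) * jacobiCoeff j (a + 2) b k := by
  have hk : a + k + 2 ≠ 0 := (by linarith [k.cast_nonneg (α := ℝ)] : 0 < a + k + 2).ne'
  have hj : a + j + 2 ≠ 0 := (by linarith [j.cast_nonneg (α := ℝ)] : 0 < a + j + 2).ne'
  have ha1 : a + 1 ≠ 0 := by linarith
  have ha2 : a + 2 ≠ 0 := by linarith
  have hQ : poch (a + 2 + 1) k ≠ 0 := (poch_pos (by linarith) k).ne'
  have hP : poch (a + 2 + 1) j ≠ 0 := (poch_pos (by linarith) j).ne'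
  have shift : a + 1 + 2 = a + 2 + 1 := by ring
  have hj2 : poch (a + 1) (j + 2) = (a + 1) * (a + 2) * poch (a + 2 + 1) j := by
    rw [poch_add_two, shift]; ring
  have hk2 : poch (a + 1) (k + 2) = (a + 1) * (a + 2) * poch (a + 2 + 1) k := by
    rw [poch_add_two, shift]; ring
  have hj1 : poch (a + 1) (j + 1) = (a + 1) * (a + 2) * poch (a + 2 + 1) j / (a + j + 2) := by
    rw [eq_div_iff hj, ← hj2, poch_succ (n := j + 1)]; push_cast; ring
  have hk1 : poch (a + 1) (k + 1) = (a + 1) * (a + 2) * poch (a + 2 + 1) k / (a + k + 2) := by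
    rw [eq_div_iff hk, ← hk2, poch_succ (n := k + 1)]; push_cast; ring
  have hm1 : poch (-(j + 1)) (k + 1) = -(j + 1) * poch (-j) k := by
    rw [poch_succ']; ring_nf
  have hm2 : poch (-(j + 1)) (k + 2) = -(j + 1) * poch (-j) k * (k - j) := by
    rw [poch_succ, hm1]; push_cast; ring
  have hs1 : poch (j + 1 + a + b + 1) (k + 1) = (j + a + b + 2) * poch (j + (a + 2) + b + 1) k := by
    rw [poch_succ']; ring_nf
  have hs2 : poch (j + 1 + a + b + 1) (k + 2)
      = (j + a + b + 2) * poch (j + (a + 2) + b + 1) k * (j + a + b + k + 3) := by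
    rw [poch_succ, hs1]; push_cast; ring
  simp only [jacobiCoeff, Nat.factorial_succ]
  push_cast
  rw [hj1, hk1, hk2, hm1, hm2, hs1, hs2]
  field_simp
  ring

lemma jacobiPoly_lowering (j : ℕ) {a : ℝ} (b : ℝ) (ha : -1 < a) :
    (1 - X) * derivative (derivative (jacobiPoly (j + 1) a b))
      - C (b + 1) * derivative (jacobiPoly (j + 1) a b)
    = C ((j + a + b + 2) * (j + 1 + b)) * jacobiPoly j (a + 2) b := by
  ext k
  have key := jacobiCoeff_lowering j k b ha
  rcases k with _ | k <;>
  · simp only [sub_mul, one_mul, coeff_sub, coeff_C_mul, coeff_X_mul_zero, coeff_X_mul,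
      coeff_derivative, coeff_jacobiPoly]
    push_cast at key ⊢
    linear_combination key

lemma fderiv_apply_self_of_homogeneous {E F : Type*} [NormedAddCommGroup E] [NormedSpace ℝ E]
    [NormedAddCommGroup F] [NormedSpace ℝ F] {f : E → F} {m : ℕ} {x : E}
    (hf : DifferentiableAt ℝ f x) (hhom : ∀ c : ℝ, f (c • x) = c ^ m • f x) :
    fderiv ℝ f x x = (m : ℝ) • f x := by
  have hline : HasDerivAt (fun c : ℝ => f (c • x)) (fderiv ℝ f x x) 1 := by
    have hf' : HasFDerivAt f (fderiv ℝ f x) ((1 : ℝ) • x) := by simpa using hf.hasFDerivAt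
    simpa [Function.comp_def] using hf'.comp_hasDerivAt (1 : ℝ) ((hasDerivAt_id 1).smul_const x)
  have hpow : HasDerivAt (fun c : ℝ => c ^ m • f x) ((m : ℝ) • f x) 1 := by
    simpa using (hasDerivAt_pow m (1 : ℝ)).smul_const (f x)
  exact hline.unique (funext hhom ▸ hpow)

section Calculus

variable {d : ℕ}

lemma sum_coord_mul_pd (f : EuclideanSpace ℝ (Fin d) → ℝ) (x : EuclideanSpace ℝ (Fin d)) :
    ∑ i, x i * pd i f x = fderiv ℝ f x x := by
  calc ∑ i, x i * pd i f x = fderiv ℝ f x (∑ i, x i • EuclideanSpace.single i 1) := by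
        simp [pd, map_sum]
    _ = fderiv ℝ f x x := by
        congr 1
        simpa using (EuclideanSpace.basisFun (Fin d) ℝ).sum_repr x

lemma pd_add {f g : EuclideanSpace ℝ (Fin d) → ℝ} {x : EuclideanSpace ℝ (Fin d)}
    (hf : DifferentiableAt ℝ f x) (hg : DifferentiableAt ℝ g x) (i : Fin d) :
    pd i (fun z => f z + g z) x = pd i f x + pd i g x := by
  simp [pd, fderiv_fun_add hf hg]

lemma pd_mul {f g : EuclideanSpace ℝ (Fin d) → ℝ} {x : EuclideanSpace ℝ (Fin d)}
    (hf : DifferentiableAt ℝ f x) (hg : DifferentiableAt ℝ g x) (i : Fin d) :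
    pd i (fun z => f z * g z) x = pd i f x * g x + f x * pd i g x := by
  simp only [pd, fderiv_fun_mul hf hg, add_apply, smul_apply, smul_eq_mul]
  ring

lemma pd_comp {f : ℝ → ℝ} {g : EuclideanSpace ℝ (Fin d) → ℝ} {x : EuclideanSpace ℝ (Fin d)}
    (hf : DifferentiableAt ℝ f (g x)) (hg : DifferentiableAt ℝ g x) (i : Fin d) :
    pd i (fun z => f (g z)) x = deriv f (g x) * pd i g x := by
  have h := (hf.hasDerivAt.comp_hasFDerivAt x hg.hasFDerivAt).fderiv
  simp only [Function.comp_def] at h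
  simp [pd, h]

lemma pd_coord (i : Fin d) (x : EuclideanSpace ℝ (Fin d)) : pd i (fun z => z i) x = 1 := by
  simp [pd, (PiLp.hasFDerivAt_apply (𝕜 := ℝ) 2 x i).fderiv]

lemma pd_norm_sq (i : Fin d) (x : EuclideanSpace ℝ (Fin d)) :
    pd i (fun z => ‖z‖ ^ 2) x = 2 * x i := by
  simp [pd, fderiv_norm_sq_apply, EuclideanSpace.inner_single_right]

lemma ContDiff.differentiable_pd {f : EuclideanSpace ℝ (Fin d) → ℝ} (hf : ContDiff ℝ 2 f)
    (i : Fin d) : Differentiable ℝ (pd i f) :=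
  ((hf.fderiv_right (m := 1) (by norm_num)).clm_apply contDiff_const).differentiable one_ne_zero

lemma pd_const_mul {f : EuclideanSpace ℝ (Fin d) → ℝ} {x : EuclideanSpace ℝ (Fin d)}
    (hf : DifferentiableAt ℝ f x) (c : ℝ) (i : Fin d) :
    pd i (fun z => c * f z) x = c * pd i f x := by
  simp [pd, fderiv_const_mul hf]

lemma lap_mul {f g : EuclideanSpace ℝ (Fin d) → ℝ} (hf : ContDiff ℝ 2 f) (hg : ContDiff ℝ 2 g)
    (x : EuclideanSpace ℝ (Fin d)) :
    lap (fun z => f z * g z) x = lap f x * g x + 2 * ∑ i, pd i f x * pd i g x + f x * lap g x := by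
  have hf₁ := hf.differentiable two_ne_zero
  have hg₁ := hg.differentiable two_ne_zero
  have hpd : ∀ i, pd i (fun z => f z * g z) = fun z => pd i f z * g z + f z * pd i g z :=
    fun i => funext fun z => pd_mul (hf₁ z) (hg₁ z) i
  simp only [lap, hpd]
  rw [Finset.sum_mul, Finset.mul_sum, Finset.mul_sum, ← Finset.sum_add_distrib,
    ← Finset.sum_add_distrib]
  refine Finset.sum_congr rfl fun i _ => ?_
  have hf₂ := hf.differentiable_pd i x
  have hg₂ := hg.differentiable_pd i x
  rw [pd_add (hf₂.fun_mul (hg₁ x)) ((hf₁ x).fun_mul hg₂), pd_mul hf₂ (hg₁ x), pd_mul (hf₁ x) hg₂]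
  ring

lemma pd_comp_norm_sq {f : ℝ → ℝ} (hf : Differentiable ℝ f) (i : Fin d) :
    pd i (fun z : EuclideanSpace ℝ (Fin d) => f (‖z‖ ^ 2))
      = fun z => 2 * (deriv f (‖z‖ ^ 2) * z i) := by
  funext z
  rw [pd_comp (hf _) ((contDiff_norm_sq ℝ (n := 1)).differentiable one_ne_zero z), pd_norm_sq]
  ring

lemma lap_comp_norm_sq {f : ℝ → ℝ} (hf : ContDiff ℝ 2 f) (x : EuclideanSpace ℝ (Fin d)) :
    lap (fun z => f (‖z‖ ^ 2)) x
      = 4 * ‖x‖ ^ 2 * deriv (deriv f) (‖x‖ ^ 2) + 2 * d * deriv f (‖x‖ ^ 2) := by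
  have hf₁ : Differentiable ℝ f := hf.differentiable two_ne_zero
  have hf₂ : Differentiable ℝ (deriv f) :=
    (contDiff_succ_iff_deriv.mp hf).2.2.differentiable one_ne_zero
  have hsq : Differentiable ℝ fun z : EuclideanSpace ℝ (Fin d) => ‖z‖ ^ 2 :=
    (contDiff_norm_sq ℝ (n := 1)).differentiable one_ne_zero
  have hterm : ∀ i, pd i (fun z => 2 * (deriv f (‖z‖ ^ 2) * z i)) x
      = 4 * deriv (deriv f) (‖x‖ ^ 2) * x i ^ 2 + 2 * deriv f (‖x‖ ^ 2) := by
    intro i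
    have hcoord : DifferentiableAt ℝ (fun z : EuclideanSpace ℝ (Fin d) => z i) x :=
      (PiLp.hasFDerivAt_apply (𝕜 := ℝ) 2 x i).differentiableAt
    have hradial : DifferentiableAt ℝ (fun z : EuclideanSpace ℝ (Fin d) => deriv f (‖z‖ ^ 2)) x :=
      (hf₂ _).comp x (hsq x)
    rw [pd_const_mul (hradial.fun_mul hcoord), pd_mul hradial hcoord, pd_comp (hf₂ _) (hsq x),
      pd_norm_sq, pd_coord]
    ring
  simp only [lap, pd_comp_norm_sq hf₁, hterm]
  rw [Finset.sum_add_distrib, ← Finset.mul_sum, ← EuclideanSpace.real_norm_sq_eq,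
    Finset.sum_const, Finset.card_univ, Fintype.card_fin, nsmul_eq_mul]
  ring

lemma lap_radial_mul_of_harmonic {f : ℝ → ℝ} {Y : EuclideanSpace ℝ (Fin d) → ℝ} {m : ℕ}
    (hf : ContDiff ℝ 2 f) (hY : ContDiff ℝ 2 Y) (hhom : ∀ (c : ℝ) x, Y (c • x) = c ^ m * Y x)
    (hharm : ∀ x, lap Y x = 0) (x : EuclideanSpace ℝ (Fin d)) :
    lap (fun z => f (‖z‖ ^ 2) * Y z) x
      = (4 * ‖x‖ ^ 2 * deriv (deriv f) (‖x‖ ^ 2) + (2 * d + 4 * m) * deriv f (‖x‖ ^ 2)) * Y x := by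
  have hcross :
      ∑ i, pd i (fun z => f (‖z‖ ^ 2)) x * pd i Y x = 2 * deriv f (‖x‖ ^ 2) * (m * Y x) := by
    have heuler : ∑ i, x i * pd i Y x = m * Y x := by
      rw [sum_coord_mul_pd]
      exact fderiv_apply_self_of_homogeneous (hY.differentiable two_ne_zero x) (hhom · x)
    rw [← heuler, Finset.mul_sum]
    simp only [pd_comp_norm_sq (hf.differentiable two_ne_zero)]
    exact Finset.sum_congr rfl fun i _ => by ring
  have hradial : ContDiff ℝ 2 fun z : EuclideanSpace ℝ (Fin d) => f (‖z‖ ^ 2) :=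
    hf.comp (contDiff_norm_sq ℝ)
  rw [lap_mul hradial hY, lap_comp_norm_sq hf, hharm, hcross]
  ring

lemma lap_jacobi_mul_of_harmonic (j m : ℕ) {a : ℝ} (ha : -1 < a)
    {Y : EuclideanSpace ℝ (Fin d) → ℝ} (hY : ContDiff ℝ 2 Y)
    (hhom : ∀ (c : ℝ) x, Y (c • x) = c ^ m * Y x) (hharm : ∀ x, lap Y x = 0)
    (x : EuclideanSpace ℝ (Fin d)) :
    lap (fun z => jacobi (j + 1) a (m + (d - 2) / 2) (2 * ‖z‖ ^ 2 - 1) * Y z) x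
      = 4 * (j + a + m + d / 2 + 1) * (j + m + d / 2) *
          (jacobi j (a + 2) (m + (d - 2) / 2) (2 * ‖x‖ ^ 2 - 1) * Y x) := by
  set b : ℝ := m + (d - 2) / 2
  set P := jacobiPoly (j + 1) a b
  have hradial : ∀ z : EuclideanSpace ℝ (Fin d),
      jacobi (j + 1) a b (2 * ‖z‖ ^ 2 - 1) = (P.comp (1 - X)).eval (‖z‖ ^ 2) := by
    intro z
    rw [jacobi_eq_eval_jacobiPoly, eval_comp]
    congr 1
    simp only [eval_sub, eval_one, eval_X]
    ring
  have hderiv : ∀ p : ℝ[X], deriv (fun s => p.eval s) = fun s => p.derivative.eval s :=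
    fun p => funext fun s => p.deriv
  have hsmooth : ContDiff ℝ 2 fun s => (P.comp (1 - X)).eval s := by
    simpa only [coe_aeval_eq_eval] using (P.comp (1 - X)).contDiff_aeval (𝕜 := ℝ) 2
  have hP' : derivative (P.comp (1 - X)) = -(derivative P).comp (1 - X) := by
    simp [derivative_comp]
  have hP'' :
      derivative (derivative (P.comp (1 - X))) = (derivative (derivative P)).comp (1 - X) := by
    simp [derivative_comp]
  have hlowering := congrArg (eval (1 - ‖x‖ ^ 2)) (jacobiPoly_lowering j b ha)
  simp only [eval_sub, eval_mul, eval_one, eval_X, eval_C, sub_sub_cancel] at hlowering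
  simp only [hradial]
  rw [lap_radial_mul_of_harmonic hsmooth hY hhom hharm x, hderiv, hderiv, hP'', hP',
    jacobi_eq_eval_jacobiPoly, show (1 - (2 * ‖x‖ ^ 2 - 1)) / 2 = 1 - ‖x‖ ^ 2 by ring]
  simp only [eval_neg, eval_comp, eval_sub, eval_one, eval_X]
  linear_combination (4 * Y x) * hlowering

end Calculus

theorem stmt8_general (d : ℕ) (mu : ℝ) (hmu : -1 < mu) (n j : ℕ) (hjn : 2 * j ≤ n)
    (Y : EuclideanSpace ℝ (Fin d) → ℝ) (hs : ContDiff ℝ ⊤ Y)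
    (hhom : ∀ (c : ℝ) (x : EuclideanSpace ℝ (Fin d)), Y (c • x) = c ^ (n - 2 * j) * Y x)
    (hharm : ∀ x, lap Y x = 0) :
    (1 ≤ j → ∀ x, lap (fun z : EuclideanSpace ℝ (Fin d) =>
          jacobi j mu ((n : ℝ) - 2 * j + ((d : ℝ) - 2) / 2) (2 * ‖z‖ ^ 2 - 1) * Y z) x
        = 4 * ((n : ℝ) - j + mu + (d : ℝ) / 2) * ((n : ℝ) - j + ((d : ℝ) - 2) / 2) *
          (jacobi (j - 1) (mu + 2) ((n : ℝ) - 2 * j + ((d : ℝ) - 2) / 2)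
              (2 * ‖x‖ ^ 2 - 1) * Y x)) ∧
    (j = 0 → ∀ x, lap (fun z : EuclideanSpace ℝ (Fin d) =>
        jacobi 0 mu ((n : ℝ) + ((d : ℝ) - 2) / 2) (2 * ‖z‖ ^ 2 - 1) * Y z) x = 0) := by
  refine ⟨fun hj x => ?_, fun _ x => by simpa [jacobi_zero] using hharm x⟩
  obtain ⟨j, rfl⟩ : ∃ i, j = i + 1 := ⟨j - 1, by omega⟩
  have hdeg : ((n - 2 * (j + 1) : ℕ) : ℝ) = n - 2 * ((j + 1 : ℕ) : ℝ) := by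
    rw [Nat.cast_sub hjn]; push_cast; ring
  have h := lap_jacobi_mul_of_harmonic j (n - 2 * (j + 1)) hmu (hs.of_le le_top) hhom hharm x
  rw [hdeg] at h
  rw [h, Nat.add_sub_cancel]
  push_cast
  ring

/-- `Δ P_{j,ν}^{n,μ} = 4(n-j+μ+d/2)(n-j+(d-2)/2) P_{j-1,ν}^{n-2,μ+2}` for `j ≥ 1`,
and `Δ P_{0,ν}^{n,μ} = 0`, where `P_{j,ν}^{n,μ}(x) = P_j^{(μ, n-2j+(d-2)/2)}(2‖x‖²-1) Yν(x)`
with `Yν` a spherical harmonic of degree `n - 2j` of unit `L²(S^{d-1})` norm. -/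
theorem stmt8 (d : ℕ) (hd : 1 ≤ d) (mu : ℝ) (hmu : -1 < mu) (n j : ℕ) (hjn : 2 * j ≤ n)
    (Y : EuclideanSpace ℝ (Fin d) → ℝ) (hs : ContDiff ℝ ⊤ Y)
    (hhom : ∀ (c : ℝ) (x : EuclideanSpace ℝ (Fin d)), Y (c • x) = c ^ (n - 2 * j) * Y x)
    (hharm : ∀ x, lap Y x = 0)
    (hnorm1 : (∫ x in Metric.sphere (0 : EuclideanSpace ℝ (Fin d)) 1,
        Y x ^ 2 ∂(μH[(d : ℝ) - 1]))
      = (μH[(d : ℝ) - 1] (Metric.sphere (0 : EuclideanSpace ℝ (Fin d)) 1)).toReal) :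
    (1 ≤ j → ∀ x, lap (fun z : EuclideanSpace ℝ (Fin d) =>
          jacobi j mu ((n : ℝ) - 2 * j + ((d : ℝ) - 2) / 2) (2 * ‖z‖ ^ 2 - 1) * Y z) x
        = 4 * ((n : ℝ) - j + mu + (d : ℝ) / 2) * ((n : ℝ) - j + ((d : ℝ) - 2) / 2) *
          (jacobi (j - 1) (mu + 2) ((n : ℝ) - 2 * j + ((d : ℝ) - 2) / 2)
              (2 * ‖x‖ ^ 2 - 1) * Y x)) ∧
    (j = 0 → ∀ x, lap (fun z : EuclideanSpace ℝ (Fin d) =>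
        jacobi 0 mu ((n : ℝ) + ((d : ℝ) - 2) / 2) (2 * ‖z‖ ^ 2 - 1) * Y z) x = 0) :=
  stmt8_general d mu hmu n j hjn Y hs hhom hharm
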